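/- In a K-armed stochastic bandit with rewards in [0,1], if arm i is suboptimal with gap δ_i = μ* − μ_i > 0, then under UCB1 the expected number of plays of arm i after n rounds satisfies E[N_i(n)] ≤ 8 (ln n)/δ_i² + 1 + π²/3. -/

import Mathlib

open MeasureTheory ProbabilityTheory

variable {Ω : Type*} [MeasurableSpace Ω]

/-- Number of times arm `i` has been played in the first `n` rounds by the
policy `I`. -/
def playCount {K : ℕ} (I : ℕ → Ω → Fin K) (n : ℕ) (i : Fin K) (ω : Ω) : ℕ :=
  ((Finset.range n).filter (fun t => I t ω = i)).card

/-- Empirical mean reward of arm `i` before round `t`: the reward of the k-th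
pull of arm `i` is `X i k`. -/
noncomputable def empMean {K : ℕ} (X : Fin K → ℕ → Ω → ℝ) (I : ℕ → Ω → Fin K)
    (i : Fin K) (t : ℕ) (ω : Ω) : ℝ :=
  (∑ k ∈ Finset.range (playCount I t i ω), X i k ω) / (playCount I t i ω)

/-- UCB1 index of arm `i` at round `t`: empirical mean plus √(2 ln t / Nᵢ(t)). -/
noncomputable def ucbIndex {K : ℕ} (X : Fin K → ℕ → Ω → ℝ) (I : ℕ → Ω → Fin K)
    (i : Fin K) (t : ℕ) (ω : Ω) : ℝ :=
  empMean X I i t ω + Real.sqrt (2 * Real.log t / (playCount I t i ω))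

/-! Once arm `i` has `N ≥ 8 ln n / δ²` pulls, at a round `t ≥ K` its UCB index is below
`μᵢ + 2√(2 ln t / N) ≤ μ*` and the index of an arm with mean `μ*` is above `μ*`, unless one of the
two empirical means deviates from its mean by the confidence radius; only then can UCB1 play `i`.
By Hoeffding's inequality such a deviation has probability at most `t⁻⁴` for each possible number
of pulls `s ≤ t`, so round `t` contributes at most `2t · t⁻⁴ ≤ 2/t²`, and
`E Nᵢ(n) ≤ ⌊8 ln n / δ²⌋ + 1 + 2 ζ(2)`. -/

open Real Finset

section Hoeffding

variable {μ : Measure Ω} [IsProbabilityMeasure μ] {Y : ℕ → Ω → ℝ}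

lemma hasSubgaussianMGF_sum_range_sub_of_mem_Icc (hY : iIndepFun Y μ)
    (hYm : ∀ k, Measurable (Y k)) (hYb : ∀ k ω, Y k ω ∈ Set.Icc (0 : ℝ) 1) (s : ℕ) :
    HasSubgaussianMGF (fun ω ↦ ∑ k ∈ range s, (Y k ω - μ[Y k])) (s / 4) μ := by
  have hind : iIndepFun (fun k ω ↦ Y k ω - μ[Y k]) μ :=
    hY.comp (fun k (y : ℝ) ↦ y - ∫ ω, Y k ω ∂μ) fun k ↦ measurable_id.sub_const _
  convert HasSubgaussianMGF.sum_of_iIndepFun hind (s := range s) fun k _ ↦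
    hasSubgaussianMGF_of_mem_Icc (hYm k).aemeasurable (ae_of_all _ (hYb k))
  simp only [sub_zero, nnnorm_one, sum_const, card_range, nsmul_eq_mul]
  ring

variable (hY : iIndepFun Y μ) (hYm : ∀ k, Measurable (Y k))
  (hYb : ∀ k ω, Y k ω ∈ Set.Icc (0 : ℝ) 1) {m : ℝ} (hm : ∀ k, μ[Y k] = m)
include hY hYm hYb hm

lemma measureReal_sum_range_sub_ge_le (s : ℕ) {ε : ℝ} (hε : 0 ≤ ε) :
    μ.real {ω | ε ≤ ∑ k ∈ range s, (Y k ω - m)} ≤ exp (-2 * ε ^ 2 / s) := by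
  have h := (hasSubgaussianMGF_sum_range_sub_of_mem_Icc hY hYm hYb s).measure_ge_le hε
  simp only [hm, NNReal.coe_div, NNReal.coe_natCast, NNReal.coe_ofNat] at h
  exact h.trans_eq (congrArg rexp (by ring))

lemma measureReal_sum_range_sub_le_neg_le (s : ℕ) {ε : ℝ} (hε : 0 ≤ ε) :
    μ.real {ω | ∑ k ∈ range s, (Y k ω - m) ≤ -ε} ≤ exp (-2 * ε ^ 2 / s) := by
  have h := (hasSubgaussianMGF_sum_range_sub_of_mem_Icc hY hYm hYb s).neg.measure_ge_le hε
  simp only [hm, Pi.neg_apply, le_neg, NNReal.coe_div, NNReal.coe_natCast,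
    NNReal.coe_ofNat] at h
  exact h.trans_eq (congrArg rexp (by ring))

end Hoeffding

open scoped Classical in
lemma integral_le_add_sum_measureReal {ι : Type*} {μ : Measure Ω} [IsProbabilityMeasure μ]
    {f : Ω → ℝ} {B : ι → Set Ω} (hB : ∀ t, MeasurableSet (B t)) (s : Finset ι) (c : ℝ)
    (hf0 : 0 ≤ f) (hf : ∀ ω, f ω ≤ c + #{t ∈ s | ω ∈ B t}) :
    ∫ ω, f ω ∂μ ≤ c + ∑ t ∈ s, μ.real (B t) := by
  have hind : ∀ t, Integrable ((B t).indicator (1 : Ω → ℝ)) μ := fun t ↦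
    (integrable_const 1).indicator (hB t)
  have hsum : Integrable (fun ω ↦ ∑ t ∈ s, (B t).indicator (1 : Ω → ℝ) ω) μ :=
    integrable_finsetSum _ fun t _ ↦ hind t
  have hcount : ∀ ω, (#{t ∈ s | ω ∈ B t} : ℝ) = ∑ t ∈ s, (B t).indicator 1 ω := by
    intro ω
    rw [Finset.card_filter]
    push_cast
    simp only [Set.indicator_apply, Pi.one_apply]
  calc ∫ ω, f ω ∂μ ≤ ∫ ω, (c + ∑ t ∈ s, (B t).indicator 1 ω) ∂μ :=
        integral_mono_of_nonneg (ae_of_all _ hf0) ((integrable_const c).add hsum)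
          (ae_of_all _ fun ω ↦ (hf ω).trans_eq (by rw [hcount]))
    _ = c + ∑ t ∈ s, μ.real (B t) := by
        rw [integral_add (integrable_const c) hsum, integral_const,
          integral_finsetSum _ fun t _ ↦ hind t]
        simp [integral_indicator_one (hB _)]

section PlayCount

omit [MeasurableSpace Ω]

variable {K : ℕ}

lemma playCount_succ (I : ℕ → Ω → Fin K) (t : ℕ) (i : Fin K) (ω : Ω) :
    playCount I (t + 1) i ω = playCount I t i ω + if I t ω = i then 1 else 0 := by
  simp only [playCount, range_add_one, filter_insert]
  split_ifs with h
  · rw [card_insert_of_notMem (by simp)]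
  · rfl

lemma playCount_le (I : ℕ → Ω → Fin K) (t : ℕ) (i : Fin K) (ω : Ω) : playCount I t i ω ≤ t :=
  (card_filter_le _ _).trans (card_range t).le

lemma playCount_le_add_card (I : ℕ → Ω → Fin K) (n : ℕ) (i : Fin K) (ω : Ω) (u : ℕ) :
    playCount I n i ω ≤ u + #{t ∈ range n | I t ω = i ∧ u ≤ playCount I t i ω} := by
  induction n with
  | zero => simp [playCount]
  | succ n ih =>
    rw [playCount_succ, range_add_one, filter_insert]
    by_cases hI : I n ω = i
    · by_cases hu : u ≤ playCount I n i ω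
      · rw [if_pos hI, if_pos ⟨hI, hu⟩, card_insert_of_notMem (by simp)]
        omega
      · rw [if_pos hI, if_neg (by tauto)]
        omega
    · rw [if_neg hI, if_neg (by tauto)]
      omega

lemma playCount_mul_ucbIndex_sub (X : Fin K → ℕ → Ω → ℝ) (I : ℕ → Ω → Fin K) (μv : Fin K → ℝ)
    {j : Fin K} {t : ℕ} {ω : Ω} (hN : playCount I t j ω ≠ 0) :
    (playCount I t j ω : ℝ) * (ucbIndex X I j t ω - μv j) =
      ∑ k ∈ range (playCount I t j ω), (X j k ω - μv j) +
        √(2 * playCount I t j ω * log t) := by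
  simp only [ucbIndex, empMean]
  generalize playCount I t j ω = N at hN ⊢
  have hN' : (N : ℝ) ≠ 0 := by exact_mod_cast hN
  have hsqrt : √(2 * N * log t) = N * √(2 * log t / N) := by
    rw [show 2 * (N : ℝ) * log t = N ^ 2 * (2 * log t / N) by field_simp,
      sqrt_mul (sq_nonneg _), sqrt_sq (Nat.cast_nonneg _)]
  rw [sum_sub_distrib, sum_const, card_range, nsmul_eq_mul, hsqrt]
  field_simp
  ring

variable {I : ℕ → Ω → Fin K} (hInit : ∀ (ω : Ω) (t : ℕ) (ht : t < K), I t ω = ⟨t, ht⟩)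
include hInit

lemma one_le_playCount {t : ℕ} (ht : K ≤ t) (j : Fin K) (ω : Ω) : 1 ≤ playCount I t j ω :=
  card_pos.2 ⟨j, mem_filter.2 ⟨mem_range.2 (j.2.trans_le ht), hInit ω j j.2⟩⟩

lemma playCount_eq_zero_of_lt {t : ℕ} (ht : t < K) (ω : Ω) : playCount I t ⟨t, ht⟩ ω = 0 := by
  rw [playCount, card_eq_zero, filter_eq_empty_iff]
  intro t' ht'
  rw [hInit ω t' ((mem_range.1 ht').trans ht), Fin.mk.injEq]
  exact (mem_range.1 ht').ne

end PlayCount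

/-- The union over all `s ≤ t` stands in for the random number of pulls `playCount`, to which
Hoeffding's inequality does not apply directly. -/
def ucbBadEvent {K : ℕ} (X : Fin K → ℕ → Ω → ℝ) (μv : Fin K → ℝ) (j i : Fin K) (t : ℕ) :
    Set Ω :=
  ⋃ s ∈ Icc 1 t, ({ω | ∑ k ∈ range s, (X j k ω - μv j) ≤ -√(2 * s * log t)} ∪
    {ω | √(2 * s * log t) ≤ ∑ k ∈ range s, (X i k ω - μv i)})

section Policy

omit [MeasurableSpace Ω]

variable {K : ℕ} {X : Fin K → ℕ → Ω → ℝ} {I : ℕ → Ω → Fin K} {μv : Fin K → ℝ}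
  (hInit : ∀ (ω : Ω) (t : ℕ) (ht : t < K), I t ω = ⟨t, ht⟩)
  (hUCB : ∀ (ω : Ω) (t : ℕ), K ≤ t → ∀ j : Fin K,
    ucbIndex X I j t ω ≤ ucbIndex X I (I t ω) t ω)
include hInit hUCB

lemma mem_ucbBadEvent {j i : Fin K} (hgap : μv i < μv j) {t : ℕ} (hKt : K ≤ t) {ω : Ω}
    (hIt : I t ω = i) (hN : 8 * log t ≤ playCount I t i ω * (μv j - μv i) ^ 2) :
    ω ∈ ucbBadEvent X μv j i t := by
  have hNj := one_le_playCount hInit hKt j ω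
  have hNi := one_le_playCount hInit hKt i ω
  by_contra hgood
  simp only [ucbBadEvent, Set.mem_iUnion, Set.mem_union, Set.mem_ofPred_eq, mem_Icc, not_exists,
    not_or, not_le] at hgood
  have hj := (hgood _ ⟨hNj, playCount_le I t j ω⟩).1
  have hi := (hgood _ ⟨hNi, playCount_le I t i ω⟩).2
  have hidx_j : μv j < ucbIndex X I j t ω := by
    have h := playCount_mul_ucbIndex_sub X I μv (show playCount I t j ω ≠ 0 by omega)
    have hpos : 0 < (playCount I t j ω : ℝ) * (ucbIndex X I j t ω - μv j) := by
      rw [h]; linarith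
    linarith [pos_of_mul_pos_right hpos (Nat.cast_nonneg _)]
  have hradius : 2 * √(2 * playCount I t i ω * log t) ≤
      playCount I t i ω * (μv j - μv i) := by
    refine le_of_pow_le_pow_left₀ two_ne_zero
      (mul_nonneg (Nat.cast_nonneg _) (sub_nonneg.2 hgap.le)) ?_
    rw [mul_pow, sq_sqrt (by positivity)]
    nlinarith
  have hidx_i : ucbIndex X I i t ω < μv j := by
    have h := playCount_mul_ucbIndex_sub X I μv (show playCount I t i ω ≠ 0 by omega)
    have hlt : (playCount I t i ω : ℝ) * (ucbIndex X I i t ω - μv i) <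
        playCount I t i ω * (μv j - μv i) := by
      rw [h]; linarith
    linarith [lt_of_mul_lt_mul_left hlt (Nat.cast_nonneg _)]
  have hmax := hUCB ω t hKt j
  rw [hIt] at hmax
  linarith

open scoped Classical in
lemma playCount_le_add_card_ucbBadEvent {j i : Fin K} (hgap : μv i < μv j) {n u : ℕ}
    (hu : 1 ≤ u) (hlog : 8 * log n ≤ u * (μv j - μv i) ^ 2) (ω : Ω) :
    playCount I n i ω ≤ u + #{t ∈ range n | ω ∈ ucbBadEvent X μv j i t} := by
  refine (playCount_le_add_card I n i ω u).trans (Nat.add_le_add_left (card_le_card ?_) u)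
  intro t ht
  simp only [mem_filter, mem_range] at ht ⊢
  obtain ⟨htn, hIt, hut⟩ := ht
  refine ⟨htn, ?_⟩
  rcases lt_or_ge t K with htK | hKt
  · have h := playCount_eq_zero_of_lt hInit htK ω
    rw [← hInit ω t htK, hIt] at h
    omega
  · refine mem_ucbBadEvent hInit hUCB hgap hKt hIt ?_
    have ht : (0 : ℝ) < t := by exact_mod_cast i.pos.trans_le hKt
    calc 8 * log t ≤ 8 * log n := by gcongr
      _ ≤ u * (μv j - μv i) ^ 2 := hlog
      _ ≤ playCount I t i ω * (μv j - μv i) ^ 2 := by gcongr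

end Policy

lemma measurableSet_ucbBadEvent {K : ℕ} {X : Fin K → ℕ → Ω → ℝ}
    (hmeas : ∀ i k, Measurable (X i k)) (μv : Fin K → ℝ) (j i : Fin K) (t : ℕ) :
    MeasurableSet (ucbBadEvent X μv j i t) := by
  have hsum : ∀ a s, Measurable fun ω ↦ ∑ k ∈ range s, (X a k ω - μv a) := fun a s ↦
    Finset.measurable_sum _ fun k _ ↦ (hmeas a k).sub_const _
  exact Finset.measurableSet_biUnion _ fun s _ ↦
    (measurableSet_le (hsum j s) measurable_const).union
      (measurableSet_le measurable_const (hsum i s))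

lemma measureReal_ucbBadEvent_le {K : ℕ} {X : Fin K → ℕ → Ω → ℝ} {μv : Fin K → ℝ}
    (Pm : Measure Ω) [IsProbabilityMeasure Pm]
    (hmeas : ∀ i k, Measurable (X i k)) (hbound : ∀ i k ω, X i k ω ∈ Set.Icc (0 : ℝ) 1)
    (hmean : ∀ i k, ∫ ω, X i k ω ∂Pm = μv i)
    (hindep : iIndepFun (fun p : Fin K × ℕ => X p.1 p.2) Pm) (j i : Fin K) (t : ℕ) :
    Pm.real (ucbBadEvent X μv j i t) ≤ 2 / t ^ 2 := by
  rcases Nat.eq_zero_or_pos t with rfl | ht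
  · simp [ucbBadEvent]
  have ht' : (1 : ℝ) ≤ t := by exact_mod_cast ht
  have harm : ∀ a, iIndepFun (X a) Pm := fun a ↦ (hindep.precomp (Prod.mk_right_injective a) :)
  have hexp : ∀ s ∈ Icc 1 t, exp (-2 * √(2 * s * log t) ^ 2 / s) = ((t : ℝ) ^ 4)⁻¹ := by
    intro s hs
    have hs0 : (s : ℝ) ≠ 0 := by have := (mem_Icc.1 hs).1; positivity
    rw [sq_sqrt (by positivity), show -2 * (2 * s * log t) / s = -((4 : ℕ) * log t) by
      field_simp; ring, exp_neg, exp_nat_mul, exp_log (by positivity)]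
  calc Pm.real (ucbBadEvent X μv j i t)
      ≤ ∑ s ∈ Icc 1 t,
          (Pm.real {ω | ∑ k ∈ range s, (X j k ω - μv j) ≤ -√(2 * s * log t)} +
            Pm.real {ω | √(2 * s * log t) ≤ ∑ k ∈ range s, (X i k ω - μv i)}) :=
        (measureReal_biUnion_finset_le _ _).trans
          (sum_le_sum fun s _ ↦ measureReal_union_le _ _)
    _ ≤ ∑ s ∈ Icc 1 t, (((t : ℝ) ^ 4)⁻¹ + ((t : ℝ) ^ 4)⁻¹) := by
        refine sum_le_sum fun s hs ↦ add_le_add ?_ ?_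
        · exact (measureReal_sum_range_sub_le_neg_le (harm j) (hmeas j) (hbound j) (hmean j) s
            (sqrt_nonneg _)).trans_eq (hexp s hs)
        · exact (measureReal_sum_range_sub_ge_le (harm i) (hmeas i) (hbound i) (hmean i) s
            (sqrt_nonneg _)).trans_eq (hexp s hs)
    _ = 2 / t ^ 3 := by
        rw [sum_const, Nat.card_Icc, nsmul_eq_mul, add_tsub_cancel_right]
        field_simp
        ring
    _ ≤ 2 / t ^ 2 := by gcongr; norm_num

lemma sum_range_two_div_sq_le (n : ℕ) : ∑ t ∈ range n, 2 / (t : ℝ) ^ 2 ≤ π ^ 2 / 3 := by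
  have h := hasSum_zeta_two.mul_left 2
  simp only [mul_one_div] at h
  rw [show π ^ 2 / 3 = 2 * (π ^ 2 / 6) by ring]
  exact sum_le_hasSum _ (fun _ _ ↦ by positivity) h

theorem ucb1_expected_plays_of_suboptimal_arm_general
    (Pm : Measure Ω) [IsProbabilityMeasure Pm]
    (K : ℕ) (n : ℕ)
    (X : Fin K → ℕ → Ω → ℝ)
    (hmeas : ∀ i k, Measurable (X i k))
    (hbound : ∀ i k ω, X i k ω ∈ Set.Icc (0 : ℝ) 1)
    (μv : Fin K → ℝ)
    (hmean : ∀ i k, ∫ ω, X i k ω ∂Pm = μv i)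
    (hindep : iIndepFun (fun p : Fin K × ℕ => X p.1 p.2) Pm)
    (I : ℕ → Ω → Fin K)
    -- each arm is played once initially
    (hInit : ∀ (ω : Ω) (t : ℕ) (ht : t < K), I t ω = ⟨t, ht⟩)
    -- afterwards, UCB1 plays the arm maximizing the UCB index
    (hUCB : ∀ (ω : Ω) (t : ℕ), K ≤ t → ∀ j : Fin K,
      ucbIndex X I j t ω ≤ ucbIndex X I (I t ω) t ω)
    (μstar : ℝ) (hstar : IsGreatest (Set.range μv) μstar)
    (i : Fin K) (hsub : 0 < μstar - μv i) :
    ∫ ω, (playCount I n i ω : ℝ) ∂Pm ≤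
      8 * Real.log n / (μstar - μv i) ^ 2 + 1 + Real.pi ^ 2 / 3 := by
  obtain ⟨j, rfl⟩ := hstar.1
  set u := ⌊8 * log n / (μv j - μv i) ^ 2⌋₊ + 1
  have hu : 8 * log n ≤ u * (μv j - μv i) ^ 2 := by
    rw [← div_le_iff₀ (by positivity)]
    exact_mod_cast (Nat.lt_floor_add_one _).le
  have hu' : (u : ℝ) ≤ 8 * log n / (μv j - μv i) ^ 2 + 1 := by
    have hx : 0 ≤ 8 * log n / (μv j - μv i) ^ 2 := by
      have := log_natCast_nonneg n
      positivity
    simp only [u, Nat.cast_add_one]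
    linarith [Nat.floor_le hx]
  calc ∫ ω, (playCount I n i ω : ℝ) ∂Pm
      ≤ u + ∑ t ∈ range n, Pm.real (ucbBadEvent X μv j i t) :=
        integral_le_add_sum_measureReal (measurableSet_ucbBadEvent hmeas μv j i) _ _
          (fun ω ↦ Nat.cast_nonneg _) fun ω ↦ by
            exact_mod_cast playCount_le_add_card_ucbBadEvent hInit hUCB (by linarith)
              (Nat.le_add_left 1 _) hu ω
    _ ≤ u + ∑ t ∈ range n, 2 / (t : ℝ) ^ 2 := by
        gcongr with t
        exact measureReal_ucbBadEvent_le Pm hmeas hbound hmean hindep j i t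
    _ ≤ 8 * log n / (μv j - μv i) ^ 2 + 1 + π ^ 2 / 3 := by
        linarith [sum_range_two_div_sq_le n]

/-- Per-arm UCB1 bound (Auer et al. 2002): for a suboptimal arm `i` with gap
δᵢ = μ* − μᵢ > 0, the expected number of plays of arm `i` after `n` rounds
under UCB1 is at most 8·(ln n)/δᵢ² + 1 + π²/3. -/
theorem ucb1_expected_plays_of_suboptimal_arm
    (Pm : Measure Ω) [IsProbabilityMeasure Pm]
    (K : ℕ) (hK : 0 < K) (n : ℕ)
    (X : Fin K → ℕ → Ω → ℝ)
    (hmeas : ∀ i k, Measurable (X i k))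
    (hbound : ∀ i k ω, X i k ω ∈ Set.Icc (0 : ℝ) 1)
    (μv : Fin K → ℝ)
    (hmean : ∀ i k, ∫ ω, X i k ω ∂Pm = μv i)
    (hiid : ∀ i k l, IdentDistrib (X i k) (X i l) Pm Pm)
    (hindep : iIndepFun (fun p : Fin K × ℕ => X p.1 p.2) Pm)
    (I : ℕ → Ω → Fin K) (hImeas : ∀ t, Measurable (I t))
    -- each arm is played once initially
    (hInit : ∀ (ω : Ω) (t : ℕ) (ht : t < K), I t ω = ⟨t, ht⟩)
    -- afterwards, UCB1 plays the arm maximizing the UCB index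
    (hUCB : ∀ (ω : Ω) (t : ℕ), K ≤ t → ∀ j : Fin K,
      ucbIndex X I j t ω ≤ ucbIndex X I (I t ω) t ω)
    (μstar : ℝ) (hstar : IsGreatest (Set.range μv) μstar)
    (i : Fin K) (hsub : 0 < μstar - μv i) :
    ∫ ω, (playCount I n i ω : ℝ) ∂Pm ≤
      8 * Real.log n / (μstar - μv i) ^ 2 + 1 + Real.pi ^ 2 / 3 :=
  ucb1_expected_plays_of_suboptimal_arm_general Pm K n X hmeas hbound μv hmean hindep I hInit hUCB
    μstar hstar i hsub
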